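/- arXiv:2605.16421 — 2 statements merged into one kernel-verified Lean document; each statement's English description precedes it below -/
import Mathlib

section
/- Completeness of the orthologic proof system: if for every ortholattice L and every valuation v : X → L one has v(φ) ≤ v(ψ), then the sequent (φ^L, ψ^R) is provable in the orthologic proof system (without non-logical axioms). -/
/-- Propositional formulas over a set `X` of variables. -/
inductive Formula (X : Type) : Type
  | var : X → Formula X
  | bot : Formula X
  | top : Formula X
  | and : Formula X → Formula X → Formula X
  | or : Formula X → Formula X → Formula X
  | not : Formula X → Formula X

/-- An ortholattice: a bounded lattice with a complement operation. -/
class Ortholattice (L : Type) extends Lattice L, BoundedOrder L where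
  compl : L → L
  compl_compl : ∀ x : L, compl (compl x) = x
  compl_sup : ∀ x y : L, compl (x ⊔ y) = compl x ⊓ compl y
  compl_inf : ∀ x y : L, compl (x ⊓ y) = compl x ⊔ compl y
  inf_compl : ∀ x : L, x ⊓ compl x = ⊥
  sup_compl : ∀ x : L, x ⊔ compl x = ⊤

/-- Homomorphic extension of a valuation `v : X → L` to formulas. -/
def Formula.eval {X L : Type} [Ortholattice L] (v : X → L) : Formula X → L
  | .var x => v x
  | .bot => ⊥
  | .top => ⊤
  | .and φ ψ => φ.eval v ⊓ ψ.eval v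
  | .or φ ψ => φ.eval v ⊔ ψ.eval v
  | .not φ => Ortholattice.compl (φ.eval v)

/-- Annotated formulas: a formula marked as left (`L`) or right (`R`). -/
inductive Ann (X : Type) : Type
  | L : Formula X → Ann X
  | R : Formula X → Ann X

/-- The underlying formula of an annotated formula. -/
def Ann.fml {X : Type} : Ann X → Formula X
  | .L φ => φ
  | .R φ => φ

/-- An orthologic sequent: an unordered pair of annotated formulas. -/
abbrev Sequent (X : Type) := Sym2 (Ann X)

/-- The orthologic proof system, with non-logical axioms `A`. -/
inductive OLProof {X : Type} (A : Set (Sequent X)) : Sequent X → Prop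
  | ax {t : Sequent X} : t ∈ A → OLProof A t
  | hyp (φ : Formula X) : OLProof A s(Ann.L φ, Ann.R φ)
  | cut (Γ Δ : Ann X) (φ : Formula X) :
      OLProof A s(Γ, Ann.R φ) → OLProof A s(Ann.L φ, Δ) → OLProof A s(Γ, Δ)
  | replace (Γ Δ : Ann X) : OLProof A s(Γ, Γ) → OLProof A s(Γ, Δ)
  | andL₁ (φ ψ : Formula X) (Δ : Ann X) :
      OLProof A s(Ann.L φ, Δ) → OLProof A s(Ann.L (φ.and ψ), Δ)
  | andL₂ (φ ψ : Formula X) (Δ : Ann X) :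
      OLProof A s(Ann.L ψ, Δ) → OLProof A s(Ann.L (φ.and ψ), Δ)
  | andR (Γ : Ann X) (φ ψ : Formula X) :
      OLProof A s(Γ, Ann.R φ) → OLProof A s(Γ, Ann.R ψ) → OLProof A s(Γ, Ann.R (φ.and ψ))
  | orL (φ ψ : Formula X) (Δ : Ann X) :
      OLProof A s(Ann.L φ, Δ) → OLProof A s(Ann.L ψ, Δ) → OLProof A s(Ann.L (φ.or ψ), Δ)
  | orR₁ (Γ : Ann X) (φ ψ : Formula X) :
      OLProof A s(Γ, Ann.R φ) → OLProof A s(Γ, Ann.R (φ.or ψ))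
  | orR₂ (Γ : Ann X) (φ ψ : Formula X) :
      OLProof A s(Γ, Ann.R ψ) → OLProof A s(Γ, Ann.R (φ.or ψ))
  | negL (Γ : Ann X) (φ : Formula X) :
      OLProof A s(Γ, Ann.R φ) → OLProof A s(Γ, Ann.L φ.not)
  | negR (φ : Formula X) (Δ : Ann X) :
      OLProof A s(Ann.L φ, Δ) → OLProof A s(Ann.R φ.not, Δ)
  | botL (Δ : Ann X) : OLProof A s(Ann.L Formula.bot, Δ)
  | topR (Γ : Ann X) : OLProof A s(Γ, Ann.R Formula.top)

/-- Satisfaction of an (ordered) pair of annotated formulas by a valuation. -/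
def AnnSat {X L : Type} [Ortholattice L] (v : X → L) : Ann X → Ann X → Prop
  | .L φ, .R ψ => φ.eval v ≤ ψ.eval v
  | .R φ, .L ψ => ψ.eval v ≤ φ.eval v
  | .L φ, .L ψ => φ.eval v ⊓ ψ.eval v = ⊥
  | .R φ, .R ψ => φ.eval v ⊔ ψ.eval v = ⊤

/-- A valuation satisfies a sequent. -/
def SeqSat {X L : Type} [Ortholattice L] (v : X → L) (t : Sequent X) : Prop :=
  ∀ a b : Ann X, t = s(a, b) → AnnSat v a b
/-- Boolean (classical) evaluation of a formula. -/
def Formula.evalB {X : Type} (v : X → Bool) : Formula X → Bool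
  | .var x => v x
  | .bot => false
  | .top => true
  | .and φ ψ => φ.evalB v && ψ.evalB v
  | .or φ ψ => φ.evalB v || ψ.evalB v
  | .not φ => !(φ.evalB v)

/-- Size of a formula (number of nodes). -/
def Formula.size {X : Type} : Formula X → Nat
  | .var _ => 1
  | .bot => 1
  | .top => 1
  | .and φ ψ => φ.size + ψ.size + 1
  | .or φ ψ => φ.size + ψ.size + 1
  | .not φ => φ.size + 1

/-- Negation normal form. -/
def Formula.nnf {X : Type} : Formula X → Formula X
  | .var x => .var x
  | .bot => .bot
  | .top => .top
  | .and φ ψ => .and φ.nnf ψ.nnf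
  | .or φ ψ => .or φ.nnf ψ.nnf
  | .not (.var x) => .not (.var x)
  | .not .bot => .top
  | .not .top => .bot
  | .not (.and φ ψ) => .or φ.not.nnf ψ.not.nnf
  | .not (.or φ ψ) => .and φ.not.nnf ψ.not.nnf
  | .not (.not φ) => φ.nnf
termination_by φ => φ.size
decreasing_by all_goals (simp [Formula.size] <;> omega)

/-- A formula is in NNF if negation occurs only directly on variables. -/
def Formula.IsNNF {X : Type} : Formula X → Prop
  | .var _ => True
  | .bot => True
  | .top => True
  | .and φ ψ => φ.IsNNF ∧ ψ.IsNNF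
  | .or φ ψ => φ.IsNNF ∧ ψ.IsNNF
  | .not (.var _) => True
  | .not _ => False

/-- `getInverse φ = nnf (¬ φ)`. -/
def getInverse {X : Type} (φ : Formula X) : Formula X := φ.not.nnf

/-- Orthologic equivalence of formulas (without non-logical axioms). -/
def OLEquiv {X : Type} (φ ψ : Formula X) : Prop :=
  OLProof (∅ : Set (Sequent X)) s(Ann.L φ, Ann.R ψ) ∧
  OLProof (∅ : Set (Sequent X)) s(Ann.L ψ, Ann.R φ)

/-- `Subformula γ φ` means `γ` is a subformula of `φ`. -/
inductive Subformula {X : Type} : Formula X → Formula X → Prop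
  | refl (φ : Formula X) : Subformula φ φ
  | and_left {γ φ ψ : Formula X} : Subformula γ φ → Subformula γ (φ.and ψ)
  | and_right {γ φ ψ : Formula X} : Subformula γ ψ → Subformula γ (φ.and ψ)
  | or_left {γ φ ψ : Formula X} : Subformula γ φ → Subformula γ (φ.or ψ)
  | or_right {γ φ ψ : Formula X} : Subformula γ ψ → Subformula γ (φ.or ψ)
  | not_sub {γ φ : Formula X} : Subformula γ φ → Subformula γ φ.not

/-!
Completeness via the Lindenbaum–Tarski algebra. Derivability of `(φ^L, ψ^R)` is a preorder on
formulas; the rules of the calculus say exactly that `∧`, `∨`, `⊥`, `⊤` are meets, joins and bounds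
for it and that `¬` is an antitone involution satisfying De Morgan and the complement laws. Hence
formulas modulo provable equivalence form an ortholattice in which the valuation `x ↦ [x]`
evaluates every formula to its own class, and `φ ≤ ψ` holding there is derivability of `(φ^L, ψ^R)`.
-/

namespace OLProof

variable {X : Type} {A : Set (Sequent X)}

theorem symm {a b : Ann X} (h : OLProof A s(a, b)) : OLProof A s(b, a) := by
  rwa [Sym2.eq_swap]

theorem left_not_left (φ : Formula X) : OLProof A s(Ann.L φ, Ann.L φ.not) :=
  negL _ _ (hyp φ)

theorem right_not_right (φ : Formula X) : OLProof A s(Ann.R φ, Ann.R φ.not) :=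
  (negR _ _ (hyp φ)).symm

def Entails (A : Set (Sequent X)) (φ ψ : Formula X) : Prop :=
  OLProof A s(Ann.L φ, Ann.R ψ)

namespace Entails

theorem refl (φ : Formula X) : Entails A φ φ := hyp φ

theorem trans {φ ψ χ : Formula X} (h₁ : Entails A φ ψ) (h₂ : Entails A ψ χ) : Entails A φ χ :=
  cut _ _ ψ h₁ h₂

theorem and_left (φ ψ : Formula X) : Entails A (φ.and ψ) φ := andL₁ _ _ _ (hyp φ)

theorem and_right (φ ψ : Formula X) : Entails A (φ.and ψ) ψ := andL₂ _ _ _ (hyp ψ)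

theorem to_and {χ φ ψ : Formula X} (h₁ : Entails A χ φ) (h₂ : Entails A χ ψ) :
    Entails A χ (φ.and ψ) :=
  andR _ _ _ h₁ h₂

theorem to_or_left (φ ψ : Formula X) : Entails A φ (φ.or ψ) := orR₁ _ _ _ (hyp φ)

theorem to_or_right (φ ψ : Formula X) : Entails A ψ (φ.or ψ) := orR₂ _ _ _ (hyp ψ)

theorem or_of {φ ψ χ : Formula X} (h₁ : Entails A φ χ) (h₂ : Entails A ψ χ) :
    Entails A (φ.or ψ) χ :=
  orL _ _ _ h₁ h₂

theorem bot (φ : Formula X) : Entails A .bot φ := botL _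

theorem top (φ : Formula X) : Entails A φ .top := topR _

theorem not {φ ψ : Formula X} (h : Entails A φ ψ) : Entails A ψ.not φ.not :=
  (negR _ _ (negL _ _ h)).symm

theorem not_not_self (φ : Formula X) : Entails A φ.not.not φ :=
  (negL _ _ (right_not_right φ)).symm

theorem self_not_not (φ : Formula X) : Entails A φ φ.not.not :=
  (negR _ _ (left_not_left φ).symm).symm

theorem not_or (φ ψ : Formula X) : Entails A (φ.or ψ).not (φ.not.and ψ.not) :=
  to_and (to_or_left φ ψ).not (to_or_right φ ψ).not

theorem to_not_or (φ ψ : Formula X) : Entails A (φ.not.and ψ.not) (φ.or ψ).not := by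
  have hφ : OLProof A s(Ann.L φ, Ann.L (φ.not.and ψ.not)) :=
    (andL₁ _ _ _ (left_not_left φ).symm).symm
  have hψ : OLProof A s(Ann.L ψ, Ann.L (φ.not.and ψ.not)) :=
    (andL₂ _ _ _ (left_not_left ψ).symm).symm
  exact (negR _ _ (orL _ _ _ hφ hψ)).symm

theorem not_and (φ ψ : Formula X) : Entails A (φ.and ψ).not (φ.not.or ψ.not) := by
  have hφ : OLProof A s(Ann.R (φ.not.or ψ.not), Ann.R φ) :=
    (orR₁ _ _ _ (right_not_right φ)).symm
  have hψ : OLProof A s(Ann.R (φ.not.or ψ.not), Ann.R ψ) :=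
    (orR₂ _ _ _ (right_not_right ψ)).symm
  exact (negL _ _ (andR _ _ _ hφ hψ)).symm

theorem to_not_and (φ ψ : Formula X) : Entails A (φ.not.or ψ.not) (φ.and ψ).not :=
  or_of (and_left φ ψ).not (and_right φ ψ).not

theorem and_not_self (φ : Formula X) : Entails A (φ.and φ.not) .bot := by
  have h : OLProof A s(Ann.L (φ.and φ.not), Ann.L φ) := andL₂ _ _ _ (left_not_left φ).symm
  exact replace _ _ (andL₁ _ _ _ h.symm)

theorem top_or_not_self (φ : Formula X) : Entails A .top (φ.or φ.not) := by
  have h : OLProof A s(Ann.R (φ.or φ.not), Ann.R φ) := (orR₂ _ _ _ (right_not_right φ)).symm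
  exact (replace _ _ (orR₁ _ _ _ h)).symm

end Entails

def setoid (A : Set (Sequent X)) : Setoid (Formula X) where
  r φ ψ := Entails A φ ψ ∧ Entails A ψ φ
  iseqv := ⟨fun φ => ⟨.refl φ, .refl φ⟩, fun h => ⟨h.2, h.1⟩,
    fun h₁ h₂ => ⟨h₁.1.trans h₂.1, h₂.2.trans h₁.2⟩⟩

end OLProof

open OLProof

def LindenbaumAlgebra {X : Type} (A : Set (Sequent X)) : Type := Quotient (OLProof.setoid A)

namespace LindenbaumAlgebra

variable {X : Type} {A : Set (Sequent X)}

def mk (A : Set (Sequent X)) (φ : Formula X) : LindenbaumAlgebra A := Quotient.mk _ φ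

instance : PartialOrder (LindenbaumAlgebra A) where
  le := Quotient.lift₂ (Entails A) fun _ _ _ _ ha hb =>
    propext ⟨fun h => ha.2.trans (h.trans hb.1), fun h => ha.1.trans (h.trans hb.2)⟩
  le_refl := by rintro ⟨φ⟩; exact .refl φ
  le_trans := by rintro ⟨φ⟩ ⟨ψ⟩ ⟨χ⟩; exact .trans
  le_antisymm := by rintro ⟨φ⟩ ⟨ψ⟩ h₁ h₂; exact Quotient.sound ⟨h₁, h₂⟩

theorem mk_le_mk {φ ψ : Formula X} : mk A φ ≤ mk A ψ ↔ Entails A φ ψ := Iff.rfl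

instance : Lattice (LindenbaumAlgebra A) where
  inf := Quotient.map₂ Formula.and fun φ φ' hφ ψ ψ' hψ =>
    ⟨.to_and ((Entails.and_left φ ψ).trans hφ.1) ((Entails.and_right φ ψ).trans hψ.1),
      .to_and ((Entails.and_left φ' ψ').trans hφ.2) ((Entails.and_right φ' ψ').trans hψ.2)⟩
  sup := Quotient.map₂ Formula.or fun φ φ' hφ ψ ψ' hψ =>
    ⟨.or_of (hφ.1.trans (.to_or_left φ' ψ')) (hψ.1.trans (.to_or_right φ' ψ')),
      .or_of (hφ.2.trans (.to_or_left φ ψ)) (hψ.2.trans (.to_or_right φ ψ))⟩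
  inf_le_left := by rintro ⟨φ⟩ ⟨ψ⟩; exact .and_left φ ψ
  inf_le_right := by rintro ⟨φ⟩ ⟨ψ⟩; exact .and_right φ ψ
  le_inf := by rintro ⟨φ⟩ ⟨ψ⟩ ⟨χ⟩; exact .to_and
  le_sup_left := by rintro ⟨φ⟩ ⟨ψ⟩; exact .to_or_left φ ψ
  le_sup_right := by rintro ⟨φ⟩ ⟨ψ⟩; exact .to_or_right φ ψ
  sup_le := by rintro ⟨φ⟩ ⟨ψ⟩ ⟨χ⟩; exact .or_of

instance : BoundedOrder (LindenbaumAlgebra A) where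
  top := mk A .top
  bot := mk A .bot
  le_top := by rintro ⟨φ⟩; exact .top φ
  bot_le := by rintro ⟨φ⟩; exact .bot φ

instance : Ortholattice (LindenbaumAlgebra A) where
  compl := Quotient.map Formula.not fun _ _ h => ⟨h.2.not, h.1.not⟩
  compl_compl := by rintro ⟨φ⟩; exact Quotient.sound ⟨.not_not_self φ, .self_not_not φ⟩
  compl_sup := by rintro ⟨φ⟩ ⟨ψ⟩; exact Quotient.sound ⟨.not_or φ ψ, .to_not_or φ ψ⟩
  compl_inf := by rintro ⟨φ⟩ ⟨ψ⟩; exact Quotient.sound ⟨.not_and φ ψ, .to_not_and φ ψ⟩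
  inf_compl := by rintro ⟨φ⟩; exact Quotient.sound ⟨.and_not_self φ, .bot _⟩
  sup_compl := by rintro ⟨φ⟩; exact Quotient.sound ⟨.top _, .top_or_not_self φ⟩

theorem eval_mk_var (φ : Formula X) : φ.eval (fun x => mk A (.var x)) = mk A φ := by
  induction φ with
  | var x => rfl
  | bot => rfl
  | top => rfl
  | and φ ψ ihφ ihψ => rw [Formula.eval, ihφ, ihψ]; rfl
  | or φ ψ ihφ ihψ => rw [Formula.eval, ihφ, ihψ]; rfl
  | not φ ih => rw [Formula.eval, ih]; rfl

end LindenbaumAlgebra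

theorem ol_completeness_general {X : Type} (φ ψ : Formula X)
    (h : ∀ (L : Type) [Ortholattice L] (v : X → L), φ.eval v ≤ ψ.eval v) :
    OLProof (∅ : Set (Sequent X)) s(Ann.L φ, Ann.R ψ) := by
  have h_canonical := h (LindenbaumAlgebra ∅) fun x => .mk ∅ (.var x)
  rwa [LindenbaumAlgebra.eval_mk_var, LindenbaumAlgebra.eval_mk_var,
    LindenbaumAlgebra.mk_le_mk] at h_canonical

/-- Completeness of the orthologic proof system: if `v(φ) ≤ v(ψ)`
for every ortholattice `L` and valuation `v : X → L`, then the sequent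
`(φ^L, ψ^R)` is provable without non-logical axioms. -/
theorem ol_completeness {X : Type} [Countable X] [Infinite X] (φ ψ : Formula X)
    (h : ∀ (L : Type) [Ortholattice L] (v : X → L), φ.eval v ≤ ψ.eval v) :
    OLProof (∅ : Set (Sequent X)) s(Ann.L φ, Ann.R ψ) :=
  ol_completeness_general φ ψ h
end

section
/- Partial cut elimination for orthologic with axioms: if a sequent (Γ, Δ) has a proof in the orthologic proof system with non-logical axioms A, then it has a proof in which, in every instance of the Cut rule, the cut formula φ occurs in one of the sequents of A. -/
/-- The orthologic proof system where every cut formula must satisfy `C`. -/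
inductive OLProofCut {X : Type} (A : Set (Sequent X)) (C : Formula X → Prop) :
    Sequent X → Prop
  | ax {t : Sequent X} : t ∈ A → OLProofCut A C t
  | hyp (φ : Formula X) : OLProofCut A C s(Ann.L φ, Ann.R φ)
  | cut (Γ Δ : Ann X) (φ : Formula X) : C φ →
      OLProofCut A C s(Γ, Ann.R φ) → OLProofCut A C s(Ann.L φ, Δ) → OLProofCut A C s(Γ, Δ)
  | replace (Γ Δ : Ann X) : OLProofCut A C s(Γ, Γ) → OLProofCut A C s(Γ, Δ)
  | andL₁ (φ ψ : Formula X) (Δ : Ann X) :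
      OLProofCut A C s(Ann.L φ, Δ) → OLProofCut A C s(Ann.L (φ.and ψ), Δ)
  | andL₂ (φ ψ : Formula X) (Δ : Ann X) :
      OLProofCut A C s(Ann.L ψ, Δ) → OLProofCut A C s(Ann.L (φ.and ψ), Δ)
  | andR (Γ : Ann X) (φ ψ : Formula X) :
      OLProofCut A C s(Γ, Ann.R φ) → OLProofCut A C s(Γ, Ann.R ψ) →
      OLProofCut A C s(Γ, Ann.R (φ.and ψ))
  | orL (φ ψ : Formula X) (Δ : Ann X) :
      OLProofCut A C s(Ann.L φ, Δ) → OLProofCut A C s(Ann.L ψ, Δ) →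
      OLProofCut A C s(Ann.L (φ.or ψ), Δ)
  | orR₁ (Γ : Ann X) (φ ψ : Formula X) :
      OLProofCut A C s(Γ, Ann.R φ) → OLProofCut A C s(Γ, Ann.R (φ.or ψ))
  | orR₂ (Γ : Ann X) (φ ψ : Formula X) :
      OLProofCut A C s(Γ, Ann.R ψ) → OLProofCut A C s(Γ, Ann.R (φ.or ψ))
  | negL (Γ : Ann X) (φ : Formula X) :
      OLProofCut A C s(Γ, Ann.R φ) → OLProofCut A C s(Γ, Ann.L φ.not)
  | negR (φ : Formula X) (Δ : Ann X) :
      OLProofCut A C s(Ann.L φ, Δ) → OLProofCut A C s(Ann.R φ.not, Δ)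
  | botL (Δ : Ann X) : OLProofCut A C s(Ann.L Formula.bot, Δ)
  | topR (Γ : Ann X) : OLProofCut A C s(Γ, Ann.R Formula.top)

/-- The orthologic proof system where every sequent occurring in the proof
(i.e. the conclusion of every rule instance) must lie in `S`. -/
inductive OLProofIn {X : Type} (A : Set (Sequent X)) (S : Set (Sequent X)) :
    Sequent X → Prop
  | ax {t : Sequent X} : t ∈ A → t ∈ S → OLProofIn A S t
  | hyp (φ : Formula X) : s(Ann.L φ, Ann.R φ) ∈ S → OLProofIn A S s(Ann.L φ, Ann.R φ)
  | cut (Γ Δ : Ann X) (φ : Formula X) : s(Γ, Δ) ∈ S →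
      OLProofIn A S s(Γ, Ann.R φ) → OLProofIn A S s(Ann.L φ, Δ) → OLProofIn A S s(Γ, Δ)
  | replace (Γ Δ : Ann X) : s(Γ, Δ) ∈ S → OLProofIn A S s(Γ, Γ) → OLProofIn A S s(Γ, Δ)
  | andL₁ (φ ψ : Formula X) (Δ : Ann X) : s(Ann.L (φ.and ψ), Δ) ∈ S →
      OLProofIn A S s(Ann.L φ, Δ) → OLProofIn A S s(Ann.L (φ.and ψ), Δ)
  | andL₂ (φ ψ : Formula X) (Δ : Ann X) : s(Ann.L (φ.and ψ), Δ) ∈ S →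
      OLProofIn A S s(Ann.L ψ, Δ) → OLProofIn A S s(Ann.L (φ.and ψ), Δ)
  | andR (Γ : Ann X) (φ ψ : Formula X) : s(Γ, Ann.R (φ.and ψ)) ∈ S →
      OLProofIn A S s(Γ, Ann.R φ) → OLProofIn A S s(Γ, Ann.R ψ) →
      OLProofIn A S s(Γ, Ann.R (φ.and ψ))
  | orL (φ ψ : Formula X) (Δ : Ann X) : s(Ann.L (φ.or ψ), Δ) ∈ S →
      OLProofIn A S s(Ann.L φ, Δ) → OLProofIn A S s(Ann.L ψ, Δ) →
      OLProofIn A S s(Ann.L (φ.or ψ), Δ)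
  | orR₁ (Γ : Ann X) (φ ψ : Formula X) : s(Γ, Ann.R (φ.or ψ)) ∈ S →
      OLProofIn A S s(Γ, Ann.R φ) → OLProofIn A S s(Γ, Ann.R (φ.or ψ))
  | orR₂ (Γ : Ann X) (φ ψ : Formula X) : s(Γ, Ann.R (φ.or ψ)) ∈ S →
      OLProofIn A S s(Γ, Ann.R ψ) → OLProofIn A S s(Γ, Ann.R (φ.or ψ))
  | negL (Γ : Ann X) (φ : Formula X) : s(Γ, Ann.L φ.not) ∈ S →
      OLProofIn A S s(Γ, Ann.R φ) → OLProofIn A S s(Γ, Ann.L φ.not)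
  | negR (φ : Formula X) (Δ : Ann X) : s(Ann.R φ.not, Δ) ∈ S →
      OLProofIn A S s(Ann.L φ, Δ) → OLProofIn A S s(Ann.R φ.not, Δ)
  | botL (Δ : Ann X) : s(Ann.L Formula.bot, Δ) ∈ S → OLProofIn A S s(Ann.L Formula.bot, Δ)
  | topR (Γ : Ann X) : s(Γ, Ann.R Formula.top) ∈ S → OLProofIn A S s(Γ, Ann.R Formula.top)

/-!
Okada-style phase semantics. Write `⊢ₐ` for provability with cuts restricted to formulas
occurring in `A`, and call `b` orthogonal to `a` when `⊢ₐ (a, b)`. Each formula `φ` is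
interpreted as a set `⟦φ⟧ = interp A φ` of annotated formulas, closed under double
orthogonality, with `φᴸ ∈ ⟦φ⟧` and every member of `⟦φ⟧` orthogonal to `φᴿ`. A sequent is
valid when everything in the interpretation of one side is orthogonal to everything in the
interpretation of the other. Every rule of the full system preserves validity, the unrestricted
cut being absorbed by the closure of `⟦φ⟧`; restricted cuts are spent only on the axiom rule,
and there the cut formulas are those of the axiom. Since every annotated formula lies in its own
interpretation, validity of a sequent yields its restricted provability.
-/

lemma OLProofCut.swap {X : Type} {A : Set (Sequent X)} {C : Formula X → Prop} {a b : Ann X}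
    (h : OLProofCut A C s(a, b)) : OLProofCut A C s(b, a) :=
  Sym2.eq_swap ▸ h

def Ann.dual {X : Type} : Ann X → Ann X
  | .L φ => .R φ
  | .R φ => .L φ

namespace PartialCutElimination

variable {X : Type} {A : Set (Sequent X)}

variable (A) in
def AxiomFormula (φ : Formula X) : Prop :=
  ∃ u ∈ A, ∃ a ∈ u, Ann.fml a = φ

variable (A) in
abbrev Provable (t : Sequent X) : Prop :=
  OLProofCut A (AxiomFormula A) t

lemma axiomFormula_left {a b : Ann X} (h : s(a, b) ∈ A) : AxiomFormula A a.fml :=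
  ⟨s(a, b), h, a, Sym2.mem_mk_left a b, rfl⟩

lemma axiomFormula_right {a b : Ann X} (h : s(a, b) ∈ A) : AxiomFormula A b.fml :=
  ⟨s(a, b), h, b, Sym2.mem_mk_right a b, rfl⟩

lemma Provable.cut_dual {a c d : Ann X} (ha : AxiomFormula A a.fml)
    (hc : Provable A s(c, a.dual)) (hd : Provable A s(a, d)) : Provable A s(c, d) := by
  cases a with
  | L φ => exact .cut c d φ ha hc hd
  | R φ => exact (OLProofCut.cut d c φ ha hd.swap hc.swap).swap

variable (A) in
def orth (S : Set (Ann X)) : Set (Ann X) :=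
  {b | ∀ a ∈ S, Provable A s(a, b)}

lemma orth_anti {S T : Set (Ann X)} (h : S ⊆ T) : orth A T ⊆ orth A S :=
  fun _ hb _ ha => hb _ (h ha)

lemma subset_orth_orth (S : Set (Ann X)) : S ⊆ orth A (orth A S) :=
  fun a ha _ hb => (hb a ha).swap

lemma orth_orth_orth_subset (S : Set (Ann X)) : orth A (orth A (orth A S)) ⊆ orth A S :=
  orth_anti (subset_orth_orth S)

variable (A) in
def interp : Formula X → Set (Ann X)
  | .var x => orth A (orth A {.L (.var x)})
  | .bot => orth A Set.univ
  | .top => orth A ∅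
  | .and φ ψ => interp φ ∩ interp ψ
  | .or φ ψ => orth A (orth A (interp φ ∪ interp ψ))
  | .not φ => orth A (interp φ)

lemma orth_orth_interp_subset (φ : Formula X) : orth A (orth A (interp A φ)) ⊆ interp A φ := by
  induction φ with
  | and φ ψ ihφ ihψ =>
    exact fun a ha => ⟨ihφ (orth_anti (orth_anti Set.inter_subset_left) ha),
      ihψ (orth_anti (orth_anti Set.inter_subset_right) ha)⟩
  | _ => exact orth_orth_orth_subset _

lemma L_mem_interp_and_provable_R (φ : Formula X) :
    Ann.L φ ∈ interp A φ ∧ ∀ a ∈ interp A φ, Provable A s(a, Ann.R φ) := by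
  induction φ with
  | var x =>
    refine ⟨subset_orth_orth _ rfl, fun a ha => (ha _ ?_).swap⟩
    rintro _ rfl
    exact .hyp _
  | bot => exact ⟨fun a _ => (OLProofCut.botL a).swap, fun a ha => (ha _ trivial).swap⟩
  | top => exact ⟨fun _ h => h.elim, fun a _ => .topR a⟩
  | and φ ψ ihφ ihψ =>
    -- `φᴸ ∈ ⟦φ⟧` and `∧-L` put `(φ ∧ ψ)ᴸ` in `⟦φ⟧ᗮᗮ`, which is `⟦φ⟧` by closure.
    refine ⟨⟨orth_orth_interp_subset φ fun c hc => (OLProofCut.andL₁ φ ψ c (hc _ ihφ.1)).swap,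
      orth_orth_interp_subset ψ fun c hc => (OLProofCut.andL₂ φ ψ c (hc _ ihψ.1)).swap⟩,
      fun a ha => .andR a φ ψ (ihφ.2 a ha.1) (ihψ.2 a ha.2)⟩
  | or φ ψ ihφ ihψ =>
    refine ⟨fun c hc => (OLProofCut.orL φ ψ c (hc _ (.inl ihφ.1)) (hc _ (.inr ihψ.1))).swap,
      fun a ha => (ha _ ?_).swap⟩
    rintro b (hb | hb)
    · exact .orR₁ b φ ψ (ihφ.2 b hb)
    · exact .orR₂ b φ ψ (ihψ.2 b hb)
  | not φ ihφ =>
    exact ⟨fun b hb => .negL b φ (ihφ.2 b hb), fun a ha => (OLProofCut.negR φ a (ha _ ihφ.1)).swap⟩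

variable (A) in
def interpAnn : Ann X → Set (Ann X)
  | .L φ => interp A φ
  | .R φ => orth A (interp A φ)

lemma mem_interpAnn_self (a : Ann X) : a ∈ interpAnn A a := by
  cases a with
  | L φ => exact (L_mem_interp_and_provable_R φ).1
  | R φ => exact (L_mem_interp_and_provable_R φ).2

lemma provable_dual_of_mem_interpAnn {a c : Ann X} (hc : c ∈ interpAnn A a) :
    Provable A s(c, a.dual) := by
  cases a with
  | L φ => exact (L_mem_interp_and_provable_R φ).2 c hc
  | R φ => exact (hc _ (L_mem_interp_and_provable_R φ).1).swap

variable (A) in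
def Valid (t : Sequent X) : Prop :=
  ∀ a b : Ann X, t = s(a, b) → ∀ c ∈ interpAnn A a, ∀ d ∈ interpAnn A b, Provable A s(c, d)

lemma valid_mk_iff {a b : Ann X} :
    Valid A s(a, b) ↔ ∀ c ∈ interpAnn A a, ∀ d ∈ interpAnn A b, Provable A s(c, d) := by
  refine ⟨fun h => h a b rfl, fun h a' b' he c hc d hd => ?_⟩
  rcases Sym2.eq_iff.mp he with ⟨rfl, rfl⟩ | ⟨rfl, rfl⟩
  · exact h c hc d hd
  · exact (h d hd c hc).swap

lemma mem_interp_of_valid_R {Γ : Ann X} {φ : Formula X} (h : Valid A s(Γ, Ann.R φ)) {c : Ann X}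
    (hc : c ∈ interpAnn A Γ) : c ∈ interp A φ :=
  orth_orth_interp_subset φ fun d hd => (valid_mk_iff.1 h c hc d hd).swap

lemma valid_of_mem {t : Sequent X} (ht : t ∈ A) : Valid A t := by
  induction t using Sym2.inductionOn with
  | hf a b =>
    refine valid_mk_iff.2 fun c hc d hd => ?_
    have hcb := Provable.cut_dual (axiomFormula_left ht) (provable_dual_of_mem_interpAnn hc)
      (.ax ht)
    exact (Provable.cut_dual (axiomFormula_right ht) (provable_dual_of_mem_interpAnn hd)
      hcb.swap).swap

lemma valid_of_olProof {t : Sequent X} (h : OLProof A t) : Valid A t := by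
  induction h with
  | ax ht => exact valid_of_mem ht
  | hyp φ => exact valid_mk_iff.2 fun c hc d hd => hd c hc
  | cut Γ Δ φ _ _ ih₁ ih₂ =>
    exact valid_mk_iff.2 fun c hc d hd => valid_mk_iff.1 ih₂ c (mem_interp_of_valid_R ih₁ hc) d hd
  | replace Γ Δ _ ih =>
    exact valid_mk_iff.2 fun c hc d _ => .replace c d (valid_mk_iff.1 ih c hc c hc)
  | andL₁ φ ψ Δ _ ih => exact valid_mk_iff.2 fun c hc d hd => valid_mk_iff.1 ih c hc.1 d hd
  | andL₂ φ ψ Δ _ ih => exact valid_mk_iff.2 fun c hc d hd => valid_mk_iff.1 ih c hc.2 d hd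
  | andR Γ φ ψ _ _ ih₁ ih₂ =>
    exact valid_mk_iff.2 fun c hc d hd =>
      hd c ⟨mem_interp_of_valid_R ih₁ hc, mem_interp_of_valid_R ih₂ hc⟩
  | orL φ ψ Δ _ _ ih₁ ih₂ =>
    refine valid_mk_iff.2 fun c hc d hd => (hc d ?_).swap
    rintro b (hb | hb)
    · exact valid_mk_iff.1 ih₁ b hb d hd
    · exact valid_mk_iff.1 ih₂ b hb d hd
  | orR₁ Γ φ ψ _ ih =>
    exact valid_mk_iff.2 fun c hc d hd =>
      hd c (subset_orth_orth _ (.inl (mem_interp_of_valid_R ih hc)))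
  | orR₂ Γ φ ψ _ ih =>
    exact valid_mk_iff.2 fun c hc d hd =>
      hd c (subset_orth_orth _ (.inr (mem_interp_of_valid_R ih hc)))
  | negL Γ φ _ ih => exact valid_mk_iff.2 fun c hc d hd => hd c (mem_interp_of_valid_R ih hc)
  | negR φ Δ _ ih =>
    exact valid_mk_iff.2 fun c hc d hd => valid_mk_iff.1 ih c (orth_orth_interp_subset φ hc) d hd
  | botL Δ => exact valid_mk_iff.2 fun c hc d _ => (hc d trivial).swap
  | topR Γ => exact valid_mk_iff.2 fun _ _ d hd => hd _ fun _ h => h.elim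

lemma provable_of_valid {t : Sequent X} (h : Valid A t) : Provable A t := by
  induction t using Sym2.inductionOn with
  | hf a b => exact valid_mk_iff.1 h a (mem_interpAnn_self a) b (mem_interpAnn_self b)

end PartialCutElimination

theorem ol_partial_cut_elimination_general {X : Type}
    (A : Set (Sequent X)) (t : Sequent X) (h : OLProof A t) :
    OLProofCut A (fun φ => ∃ u ∈ A, ∃ a ∈ u, Ann.fml a = φ) t :=
  PartialCutElimination.provable_of_valid (PartialCutElimination.valid_of_olProof h)

/-- Partial cut elimination: a sequent provable from axioms `A`
has a proof in which every cut formula occurs in one of the sequents of `A`. -/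
theorem ol_partial_cut_elimination {X : Type} [Countable X] [Infinite X]
    (A : Set (Sequent X)) (t : Sequent X) (h : OLProof A t) :
    OLProofCut A (fun φ => ∃ u ∈ A, ∃ a ∈ u, Ann.fml a = φ) t :=
  ol_partial_cut_elimination_general A t h
end
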